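/- In the tensor product of m cycles of length 2n (n ≥ 3), two neighbours of the vertex v = (0,…,0) that differ in exactly k coordinates have exactly 2^{m−k} common neighbours; in particular, two neighbours of v differ in exactly one coordinate if and only if they have 2^{m−1} common neighbours. -/

import Mathlib

/-- The tensor (direct) product of `m` cycles of length `2n`: vertices are
`(ℤ/2nℤ)^m`, and `(b₁,…,b_m)` is adjacent to `(c₁,…,c_m)` iff `bᵢ − cᵢ ≡ ±1 (mod 2n)`
for all `i`. -/
def cycleTensor (n m : ℕ) : SimpleGraph (Fin m → ZMod (2 * n)) where
  Adj x y := x ≠ y ∧ ∀ i, x i - y i = 1 ∨ x i - y i = -1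
  symm := by
    constructor
    rintro x y ⟨hne, hs⟩
    refine ⟨hne.symm, fun i => ?_⟩
    rcases hs i with h | h
    · right
      have : y i - x i = -(x i - y i) := by ring
      rw [this, h]
    · left
      have : y i - x i = -(x i - y i) := by ring
      rw [this, h]; ring
  loopless := ⟨fun x h => h.1 rfl⟩

/-!
A common neighbour `x` of `s` and `t` is found coordinatewise: `x i ∈ {s i ± 1} ∩ {t i ± 1}`
(the side condition `x ≠ s` is automatic once `m ≥ 1`). Where `s i = t i` this is `{s i ± 1}`,
of size 2; where `s i ≠ t i` it is `{0, 2} ∩ {-2, 0} = {0}`, because `4 ≠ 0` in `ℤ/2nℤ` for `n ≥ 3`.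
Hence there are `2 ^ (m - k)` common neighbours.
-/

section CycleNeighbors

variable {R : Type*} [CommRing R] [DecidableEq R]

def cycleNeighbors (a : R) : Finset R := {a - 1, a + 1}

theorem mem_cycleNeighbors {a x : R} : x ∈ cycleNeighbors a ↔ a - x = 1 ∨ a - x = -1 := by
  simp only [cycleNeighbors, Finset.mem_insert, Finset.mem_singleton]
  constructor <;> rintro (h | h) <;> [left; right; left; right] <;> linear_combination -h

theorem ne_of_mem_cycleNeighbors (h1 : (1 : R) ≠ 0) {a x : R} (hx : x ∈ cycleNeighbors a) :
    x ≠ a := by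
  rintro rfl
  rcases mem_cycleNeighbors.1 hx with h | h
  exacts [h1 (by linear_combination -h), h1 (by linear_combination h)]

theorem card_cycleNeighbors (h2 : (2 : R) ≠ 0) (a : R) : (cycleNeighbors a).card = 2 :=
  Finset.card_pair fun h => h2 (by linear_combination -h)

theorem cycleNeighbors_one_inter_neg_one (h4 : (4 : R) ≠ 0) :
    cycleNeighbors (1 : R) ∩ cycleNeighbors (-1) = {0} := by
  ext x
  simp only [cycleNeighbors, Finset.mem_inter, Finset.mem_insert, Finset.mem_singleton]
  constructor
  · rintro ⟨h | h, h' | h'⟩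
    · linear_combination h
    · linear_combination h
    · exact absurd (by linear_combination h' - h) h4
    · linear_combination h'
  · rintro rfl
    norm_num

theorem card_cycleNeighbors_inter (h4 : (4 : R) ≠ 0) {a b : R} (ha : a = 1 ∨ a = -1)
    (hb : b = 1 ∨ b = -1) :
    (cycleNeighbors a ∩ cycleNeighbors b).card = if a = b then 2 else 1 := by
  split_ifs with hab
  · rw [hab, Finset.inter_self]
    exact card_cycleNeighbors (fun h => h4 (by linear_combination 2 * h)) b
  · rcases ha with rfl | rfl <;> rcases hb with rfl | rfl
    · exact absurd rfl hab
    · rw [cycleNeighbors_one_inter_neg_one h4, Finset.card_singleton]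
    · rw [Finset.inter_comm, cycleNeighbors_one_inter_neg_one h4, Finset.card_singleton]
    · exact absurd rfl hab

end CycleNeighbors

theorem ZMod.four_ne_zero_of_three_le {n : ℕ} (hn : 3 ≤ n) : (4 : ZMod (2 * n)) ≠ 0 := by
  have h := (ZMod.natCast_eq_zero_iff 4 (2 * n)).not.2 fun h => by
    have := Nat.le_of_dvd (by norm_num) h; omega
  exact_mod_cast h

theorem cycleTensor_adj_iff {n m : ℕ} (hm : 0 < m) (h1 : (1 : ZMod (2 * n)) ≠ 0)
    {x y : Fin m → ZMod (2 * n)} :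
    (cycleTensor n m).Adj x y ↔ ∀ i, y i ∈ cycleNeighbors (x i) := by
  simp only [mem_cycleNeighbors]
  refine ⟨fun h => h.2, fun h => ⟨fun hxy => ?_, h⟩⟩
  let i : Fin m := ⟨0, hm⟩
  exact ne_of_mem_cycleNeighbors h1 (mem_cycleNeighbors.2 (h i)) (congrFun hxy i).symm

theorem natCard_cycleTensor_commonNeighbors {n m : ℕ} (hm : 0 < m) (h1 : (1 : ZMod (2 * n)) ≠ 0)
    (s t : Fin m → ZMod (2 * n)) :
    Nat.card {x // (cycleTensor n m).Adj s x ∧ (cycleTensor n m).Adj t x} =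
      ∏ i, (cycleNeighbors (s i) ∩ cycleNeighbors (t i)).card := by
  have key : ∀ x, (cycleTensor n m).Adj s x ∧ (cycleTensor n m).Adj t x ↔
      x ∈ Fintype.piFinset fun i => cycleNeighbors (s i) ∩ cycleNeighbors (t i) := by
    simp [cycleTensor_adj_iff hm h1, Finset.mem_inter, forall_and]
  simp_rw [key]
  rw [Nat.card_eq_fintype_card, Fintype.card_coe, Fintype.card_piFinset]

theorem prod_ite_one_eq_pow_card_filter {ι M : Type*} [Fintype ι] [CommMonoid M] (p : ι → Prop)
    [DecidablePred p] (a : M) :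
    ∏ i, (if p i then a else 1) = a ^ (Finset.univ.filter p).card := by
  rw [Finset.prod_ite, Finset.prod_const, Finset.prod_const_one, mul_one]

/-- In the tensor product of `m` cycles of length `2n` (`n ≥ 3`),
two neighbours of the vertex `v = (0,…,0)` (i.e. vertices `(±1,…,±1)`) that differ
in exactly `k` coordinates have exactly `2^(m−k)` common neighbours; in particular,
two neighbours of `v` differ in exactly one coordinate if and only if they have
`2^(m−1)` common neighbours. -/
theorem cycle_tensor_common_neighbours (n m k : ℕ) (hn : 3 ≤ n) (hm : 1 ≤ m)
    (s t : Fin m → ZMod (2 * n))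
    (hs : ∀ i, s i = 1 ∨ s i = -1) (ht : ∀ i, t i = 1 ∨ t i = -1)
    (hk : (Finset.univ.filter fun i => s i ≠ t i).card = k) :
    Nat.card {x : Fin m → ZMod (2 * n) //
        (cycleTensor n m).Adj s x ∧ (cycleTensor n m).Adj t x} = 2 ^ (m - k) ∧
    (k = 1 ↔
      Nat.card {x : Fin m → ZMod (2 * n) //
        (cycleTensor n m).Adj s x ∧ (cycleTensor n m).Adj t x} = 2 ^ (m - 1)) := by
  have h4 := ZMod.four_ne_zero_of_three_le hn
  have h1 : (1 : ZMod (2 * n)) ≠ 0 := fun h => h4 (by linear_combination 4 * h)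
  have hsplit : (Finset.univ.filter fun i => s i = t i).card + k = m := by
    simpa [← hk] using Finset.card_filter_add_card_filter_not (s := Finset.univ) fun i => s i = t i
  have hcard : Nat.card {x // (cycleTensor n m).Adj s x ∧ (cycleTensor n m).Adj t x} =
      2 ^ (m - k) := by
    rw [natCard_cycleTensor_commonNeighbors hm h1,
      show m - k = (Finset.univ.filter fun i => s i = t i).card by omega,
      ← prod_ite_one_eq_pow_card_filter]
    exact Finset.prod_congr rfl fun i _ => card_cycleNeighbors_inter h4 (hs i) (ht i)
  refine ⟨hcard, ?_⟩
  rw [hcard, (Nat.pow_right_injective le_rfl).eq_iff]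
  omega
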